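/- For every positive integers D and T, there exists a base class F ⊆ {0,1}^{ {0,1}* } with VCdim(F) = D such that the end-to-end class after T iterations has VCdim(F^{e2e(T)}) = D · T, where the shattered set consists of DT binary strings of length ⌈log₂(DT)⌉ + 1. -/

import Mathlib

def applyAppend (f : List Bool → Bool) (x : List Bool) : List Bool := x ++ [f x]

def cot (f : List Bool → Bool) (T : ℕ) (x : List Bool) : List Bool :=
  (applyAppend f)^[T] x

def e2e (f : List Bool → Bool) (T : ℕ) (x : List Bool) : Bool :=
  (cot f T x).getLastD false

def e2eClass (F : Set (List Bool → Bool)) (T : ℕ) : Set (List Bool → Bool) :=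
  (fun f => e2e f T) '' F

/-- `H` shatters the particular tuple of points `x`. -/
def ShattersWith {X : Type*} (H : Set (X → Bool)) {d : ℕ} (x : Fin d → X) : Prop :=
  ∀ b : Fin d → Bool, ∃ h ∈ H, ∀ i, h (x i) = b i

def Shatters {X : Type*} (H : Set (X → Bool)) (d : ℕ) : Prop :=
  ∃ x : Fin d → X, ShattersWith H x

/-!
Lay the `D * T` cells of a `T × D` grid out as `n = row * D + col` and let a Boolean table `b`
assign a bit to each cell. A point is a fixed-length binary code of a cell `n` followed by a
suffix `w`; the predictor of `b` reads the column of `n` downwards, saturating at the row of `n`,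
and outputs its next bit if `w` is a prefix of that column stream (and `false` otherwise).
Started on the bare code of `n`, chain of thought writes out the column stream, so after `T` steps
the last token is `b n`: the end-to-end class realises every table and shatters all `D * T` cells,
and it has no more than `2 ^ (D * T)` members. In the base class itself, the parameters accepted
at a point form a cylinder fixed by an initial segment of one column, so points of a column are
ordered by implication and a shattered set meets each of the `D` columns at most once.
-/

open Function

theorem cot_succ (f : List Bool → Bool) (r : ℕ) (x : List Bool) :
    cot f (r + 1) x = cot f r x ++ [f (cot f r x)] :=
  iterate_succ_apply' _ _ _

theorem e2e_succ (f : List Bool → Bool) (r : ℕ) (x : List Bool) :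
    e2e f (r + 1) x = f (cot f r x) := by
  rw [e2e, cot_succ, List.getLastD_concat]

theorem e2eClass_range {ι : Type*} (φ : ι → List Bool → Bool) (T : ℕ) :
    e2eClass (Set.range φ) T = Set.range fun b => e2e (φ b) T :=
  (Set.range_comp _ _).symm

section Shattering

variable {X ι : Type*} {d : ℕ}

theorem shattersWith_range_of_eval (φ : (ι → Bool) → X → Bool) (x : Fin d → X)
    (e : Fin d → ι) (he : Injective e) (h : ∀ b i, φ b (x i) = b (e i)) :
    ShattersWith (Set.range φ) x := fun β =>
  ⟨φ (extend e β fun _ => false), Set.mem_range_self _, fun i => by rw [h, he.extend_apply]⟩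

theorem Shatters.le_card_of_dependsOn (φ : (ι → Bool) → X → Bool) (s : Finset ι)
    (hφ : ∀ b b', (∀ i ∈ s, b i = b' i) → φ b = φ b') (h : Shatters (Set.range φ) d) :
    d ≤ s.card := by
  classical
  obtain ⟨x, hx⟩ := h
  choose g hg hgx using hx
  choose b hb using hg
  have hinj : Injective fun β (i : s) => b β i := by
    intro β β' hββ'
    have hφββ' : g β = g β' := by
      rw [← hb, ← hb]
      exact hφ _ _ fun i hi => congrFun hββ' ⟨i, hi⟩
    funext i
    rw [← hgx β i, ← hgx β' i, hφββ']
  have hcard := Fintype.card_le_of_injective _ hinj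
  simp only [Fintype.card_fun, Fintype.card_bool, Fintype.card_fin, Fintype.card_coe] at hcard
  exact (Nat.pow_le_pow_iff_right one_lt_two).mp hcard

theorem Shatters.le_card_of_chains {κ : Type*} [Fintype κ] {H : Set (X → Bool)} (key : X → κ)
    (μ : X → ℕ)
    (hchain : ∀ x y, key x = key y → μ x ≤ μ y →
      ∀ g ∈ H, g x = true → g y = true → ∀ h ∈ H, h y = true → h x = true)
    (h : Shatters H d) : d ≤ Fintype.card κ := by
  obtain ⟨x, hx⟩ := h
  have separated : ∀ i j, i ≠ j → key (x i) = key (x j) → ¬ μ (x i) ≤ μ (x j) := by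
    intro i j hij hkey hμ
    obtain ⟨g, hg, hgx⟩ := hx fun _ => true
    obtain ⟨h, hh, hhx⟩ := hx fun k => decide (k ≠ i)
    have := hchain _ _ hkey hμ g hg (hgx i) (hgx j) h hh (by simp [hhx, hij.symm])
    simp [hhx] at this
  by_contra! hd
  obtain ⟨i, j, hij, hkey⟩ :=
    Fintype.exists_ne_map_eq_of_card_lt (key ∘ x) (by simpa using hd)
  rcases le_total (μ (x i)) (μ (x j)) with hμ | hμ
  · exact separated i j hij hkey hμ
  · exact separated j i hij.symm hkey.symm hμ

end Shattering

section StreamPredictor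

def streamPredictor (σ : ℕ → Bool) (w : List Bool) : Bool :=
  decide (w = (List.range w.length).map σ) && σ w.length

variable {σ σ' : ℕ → Bool} {w : List Bool}

theorem streamPredictor_eq_true :
    streamPredictor σ w = true ↔ w = (List.range w.length).map σ ∧ σ w.length = true := by
  simp [streamPredictor]

theorem streamPredictor_map_range (σ : ℕ → Bool) (r : ℕ) :
    streamPredictor σ ((List.range r).map σ) = σ r := by
  simp [streamPredictor]

theorem streamPredictor_nil (σ : ℕ → Bool) : streamPredictor σ [] = σ 0 :=
  streamPredictor_map_range σ 0

theorem streamPredictor_congr (h : ∀ k ≤ w.length, σ k = σ' k) :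
    streamPredictor σ w = streamPredictor σ' w := by
  have hmap : (List.range w.length).map σ = (List.range w.length).map σ' :=
    List.map_congr_left fun k hk => h k (List.mem_range.mp hk).le
  rw [streamPredictor, streamPredictor, hmap, h _ le_rfl]

theorem eq_of_streamPredictor_eq_true (h : streamPredictor σ w = true)
    (h' : streamPredictor σ' w = true) : ∀ k ≤ w.length, σ k = σ' k := by
  rw [streamPredictor_eq_true] at h h'
  intro k hk
  rcases hk.lt_or_eq with hk | rfl
  · exact List.map_inj_left.mp (h.1.symm.trans h'.1) k (List.mem_range.mpr hk)
  · rw [h.2, h'.2]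

end StreamPredictor

def encodeBits : ℕ → ℕ → List Bool
  | 0, _ => []
  | L + 1, n => decide (n % 2 = 1) :: encodeBits L (n / 2)

def decodeBits : List Bool → ℕ
  | [] => 0
  | b :: l => b.toNat + 2 * decodeBits l

theorem length_encodeBits (L n : ℕ) : (encodeBits L n).length = L := by
  induction L generalizing n with
  | zero => rfl
  | succ L ih => simp [encodeBits, ih]

theorem decodeBits_encodeBits {L n : ℕ} (h : n < 2 ^ L) : decodeBits (encodeBits L n) = n := by
  induction L generalizing n with
  | zero =>
    obtain rfl : n = 0 := by simpa using h
    rfl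
  | succ L ih =>
    rw [encodeBits, decodeBits, ih (by rw [pow_succ] at h; omega)]
    rcases Nat.mod_two_eq_zero_or_one n with hn | hn <;> simp [hn] <;> omega

section Grid

variable (D T : ℕ)

def prefixLength : ℕ := Nat.clog 2 (D * T) + 1

def point (n : ℕ) : List Bool := encodeBits (prefixLength D T) n

-- Reducing mod `D * T` puts every string in a cell, so a predictor reads `b` only below `D * T`.
def index (x : List Bool) : ℕ := decodeBits (x.take (prefixLength D T)) % (D * T)

def suffix (x : List Bool) : List Bool := x.drop (prefixLength D T)

def columnStream (b : ℕ → Bool) (n k : ℕ) : Bool := b (min k (n / D) * D + n % D)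

def predictor (b : ℕ → Bool) (x : List Bool) : Bool :=
  streamPredictor (columnStream D b (index D T x)) (suffix D T x)

def baseClass : Set (List Bool → Bool) := Set.range (predictor D T)

/-- The deepest row of its column that the predictor consults at `x`. -/
def depth (x : List Bool) : ℕ := min (suffix D T x).length (index D T x / D)

variable {D T}

theorem length_point (n : ℕ) : (point D T n).length = Nat.clog 2 (D * T) + 1 :=
  length_encodeBits _ _

theorem index_point_append {n : ℕ} (hn : n < D * T) (w : List Bool) :
    index D T (point D T n ++ w) = n := by
  have hn2 : n < 2 ^ prefixLength D T :=
    hn.trans_le <| (Nat.le_pow_clog one_lt_two _).trans <|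
      Nat.pow_le_pow_right two_pos (Nat.le_succ _)
  rw [index, point, List.take_left' (length_encodeBits _ _), decodeBits_encodeBits hn2,
    Nat.mod_eq_of_lt hn]

theorem suffix_point_append (n : ℕ) (w : List Bool) : suffix D T (point D T n ++ w) = w :=
  List.drop_left' (length_encodeBits _ _)

theorem predictor_point_append (b : ℕ → Bool) {n : ℕ} (hn : n < D * T) (w : List Bool) :
    predictor D T b (point D T n ++ w) = streamPredictor (columnStream D b n) w := by
  rw [predictor, index_point_append hn, suffix_point_append]

theorem predictor_point (b : ℕ → Bool) {n : ℕ} (hnD : n < D) (hT : 0 < T) :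
    predictor D T b (point D T n) = b n := by
  have hn : n < D * T := hnD.trans_le (Nat.le_mul_of_pos_right D hT)
  simpa [streamPredictor_nil, columnStream, Nat.mod_eq_of_lt hnD] using
    predictor_point_append b hn []

theorem cot_predictor_point (b : ℕ → Bool) {n : ℕ} (hn : n < D * T) (r : ℕ) :
    cot (predictor D T b) r (point D T n) =
      point D T n ++ (List.range r).map (columnStream D b n) := by
  induction r with
  | zero => simp [cot]
  | succ r ih =>
    rw [cot_succ, ih, predictor_point_append b hn, streamPredictor_map_range,
      List.range_succ, List.map_append, List.append_assoc, List.map_singleton]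

theorem e2e_predictor_point (b : ℕ → Bool) (hD : 0 < D) {n : ℕ} (hn : n < D * T) :
    e2e (predictor D T b) T (point D T n) = b n := by
  obtain ⟨r, rfl⟩ : ∃ r, T = r + 1 :=
    Nat.exists_eq_add_one.mpr (Nat.pos_of_mul_pos_left (Nat.zero_lt_of_lt hn))
  have hrow : n / D ≤ r :=
    Nat.lt_succ_iff.mp <| (Nat.div_lt_iff_lt_mul hD).mpr (by rwa [mul_comm])
  rw [e2e_succ, cot_predictor_point b hn, predictor_point_append b hn, streamPredictor_map_range,
    columnStream, min_eq_right hrow, Nat.div_add_mod']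

theorem predictor_congr {b b' : ℕ → Bool} {x : List Bool}
    (h : ∀ j ≤ depth D T x, b (j * D + index D T x % D) = b' (j * D + index D T x % D)) :
    predictor D T b x = predictor D T b' x :=
  streamPredictor_congr fun _ hk => h _ (min_le_min_right _ hk)

theorem eq_of_predictor_eq_true {b b' : ℕ → Bool} {x : List Bool}
    (h : predictor D T b x = true) (h' : predictor D T b' x = true) :
    ∀ j ≤ depth D T x, b (j * D + index D T x % D) = b' (j * D + index D T x % D) := by
  intro j hj
  have := eq_of_streamPredictor_eq_true h h' j (hj.trans (min_le_left _ _))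
  rwa [columnStream, columnStream, min_eq_left (hj.trans (min_le_right _ _))] at this

theorem baseClass_chain {x y : List Bool} (hcol : index D T x % D = index D T y % D)
    (hdepth : depth D T x ≤ depth D T y) :
    ∀ g ∈ baseClass D T, g x = true → g y = true →
      ∀ h ∈ baseClass D T, h y = true → h x = true := by
  rintro _ ⟨b, rfl⟩ hx hy _ ⟨b', rfl⟩ hy'
  have hagree := eq_of_predictor_eq_true hy hy'
  rw [← hcol] at hagree
  rw [← predictor_congr fun j hj => hagree j (hj.trans hdepth), hx]

theorem predictor_eq_of_eqOn (hDT : 0 < D * T) {b b' : ℕ → Bool}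
    (h : ∀ i ∈ Finset.range (D * T), b i = b' i) : predictor D T b = predictor D T b' := by
  funext x
  refine predictor_congr fun j hj => h _ (Finset.mem_range.mpr ?_)
  have hrow : j ≤ index D T x / D := hj.trans (min_le_right _ _)
  calc j * D + index D T x % D ≤ index D T x / D * D + index D T x % D := by gcongr
    _ = index D T x := Nat.div_add_mod' _ _
    _ < D * T := Nat.mod_lt _ hDT

end Grid

/-- for every `D, T ≥ 1` there is a base class `F` with `VCdim(F) = D`
whose end-to-end class after `T` iterations has `VCdim(F^{e2e(T)}) = D·T`, the
shattered set consisting of `D·T` binary strings of length `⌈log₂(DT)⌉ + 1`. -/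
theorem exists_baseClass_vc_blowup (D T : ℕ) (hD : 0 < D) (hT : 0 < T) :
    ∃ F : Set (List Bool → Bool),
      (Shatters F D ∧ ∀ d, Shatters F d → d ≤ D) ∧
      (∃ x : Fin (D * T) → List Bool,
        (∀ i, (x i).length = Nat.clog 2 (D * T) + 1) ∧
        ShattersWith (e2eClass F T) x) ∧
      (∀ d, Shatters (e2eClass F T) d → d ≤ D * T) := by
  refine ⟨baseClass D T, ⟨?_, fun d hd => ?_⟩,
    ⟨fun i => point D T i, fun i => length_point i, ?_⟩, fun d hd => ?_⟩
  · exact ⟨_, shattersWith_range_of_eval _ (fun j : Fin D => point D T j) Fin.val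
      Fin.val_injective fun b j => predictor_point b j.isLt hT⟩
  · simpa using hd.le_card_of_chains (fun x => (⟨index D T x % D, Nat.mod_lt _ hD⟩ : Fin D))
      (depth D T) fun x y hxy => baseClass_chain (congrArg Fin.val hxy)
  · rw [baseClass, e2eClass_range]
    exact shattersWith_range_of_eval _ _ Fin.val Fin.val_injective
      fun b i => e2e_predictor_point b hD i.isLt
  · rw [baseClass, e2eClass_range] at hd
    simpa using hd.le_card_of_dependsOn _ (Finset.range (D * T)) fun b b' h => by
      rw [predictor_eq_of_eqOn (Nat.mul_pos hD hT) h]
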